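/- arXiv:1002.4570 — 3 statements merged into one kernel-verified Lean document; each statement's English description precedes it below -/
import Mathlib

section
/- Let D be a finite set of stations with positive weights w_j and service rates μ_j, and a finite family of neighbourhoods S_i ⊆ D with arrival rates λ_i ≥ 0. For a cluster C ⊆ D define W(C) = (1/|C|) · min over static policies π (with π(i) a probability vector supported on S_i ∩ C, and only neighbourhoods S_i ⊆ C contributing) of Σ_{j∈C} w_j (Σ_{i: S_i⊆C} λ_i π(i)_j − μ_j). Suppose A, B ⊆ D are clusters with W(A) = W(B) = v where v = max_{C⊆D, C≠∅} W(C). Then W(A ∪ B) = v and every neighbourhood S_i ⊆ A∪B with S_i ⊄ A and S_i ⊄ B has λ_i = 0. -/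
/-!
Sending every neighbourhood to the lightest station of `S i` is an optimal static policy, so
`|C| · W(C)` equals `F(C) = ∑_{S i ⊆ C} λ_i · min_{S i} w − ∑_{j ∈ C} w_j μ_j`. The function `F`
is supermodular: `F(A ∪ B) + F(A ∩ B)` exceeds `F(A) + F(B)` by the contribution of the
neighbourhoods inside `A ∪ B` but inside neither `A` nor `B`. Since `F(C) ≤ |C| · v` for every `C`
with equality at `A` and `B`, and `|A ∪ B| + |A ∩ B| = |A| + |B|`, this excess must vanish and
`F(A ∪ B) = |A ∪ B| · v`.
-/

open Finset

/-- Restricted average drift on a cluster `C`: `(1/|C|)` times the infimum, over static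
policies `π` (each `π i` a probability vector supported on `S i`), of
`∑_{j∈C} w j * (∑_{i : S i ⊆ C} lam i * π i j − μ j)`. -/
noncomputable def restrictedDrift {ι κ : Type*} [Fintype ι] [Fintype κ] [DecidableEq ι]
    (S : κ → Finset ι) (lam : κ → ℝ) (w μ : ι → ℝ) (C : Finset ι) : ℝ :=
  (C.card : ℝ)⁻¹ * sInf { v : ℝ | ∃ π : κ → ι → ℝ,
    (∀ i, (∀ j, 0 ≤ π i j) ∧ (∀ j, j ∉ S i → π i j = 0) ∧ (∑ j, π i j) = 1) ∧
    v = ∑ j ∈ C, w j *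
      ((∑ i ∈ Finset.univ.filter (fun i => S i ⊆ C), lam i * π i j) - μ j) }

lemma Finset.inf'_le_sum_mul_of_support_subset {ι : Type*} [Fintype ι] {s C : Finset ι}
    (hs : s.Nonempty) (hsC : s ⊆ C) (w : ι → ℝ) {p : ι → ℝ} (hp : ∀ j, 0 ≤ p j)
    (hps : ∀ j, j ∉ s → p j = 0) (hp1 : ∑ j, p j = 1) :
    s.inf' hs w ≤ ∑ j ∈ C, w j * p j := by
  have hpC : ∑ j ∈ C, p j = 1 := by
    rw [← hp1]
    exact sum_subset (subset_univ C) fun j _ hj => hps j fun hjs => hj (hsC hjs)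
  calc s.inf' hs w = ∑ j ∈ C, s.inf' hs w * p j := by rw [← mul_sum, hpC, mul_one]
    _ ≤ ∑ j ∈ C, w j * p j := by
      refine sum_le_sum fun j _ => ?_
      by_cases hj : j ∈ s
      · exact mul_le_mul_of_nonneg_right (inf'_le w hj) (hp j)
      · simp [hps j hj]

lemma sum_mul_sum_sub_eq {ι κ : Type*} (F : Finset κ) (C : Finset ι) (lam : κ → ℝ)
    (w μ : ι → ℝ) (π : κ → ι → ℝ) :
    ∑ j ∈ C, w j * ((∑ i ∈ F, lam i * π i j) - μ j)
      = (∑ i ∈ F, lam i * ∑ j ∈ C, w j * π i j) - ∑ j ∈ C, w j * μ j := by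
  simp only [mul_sub, sum_sub_distrib, mul_sum]
  rw [sum_comm]
  congr 1
  exact sum_congr rfl fun i _ => sum_congr rfl fun j _ => by ring

section Drift

variable {ι κ : Type*} [Fintype κ] [DecidableEq ι]
  (S : κ → Finset ι) (lam : κ → ℝ) (w μ : ι → ℝ) (hS : ∀ i, (S i).Nonempty)

noncomputable def optimalTotalDrift (C : Finset ι) : ℝ :=
  (∑ i ∈ univ.filter (fun i => S i ⊆ C), lam i * (S i).inf' (hS i) w) - ∑ j ∈ C, w j * μ j

lemma isLeast_optimalTotalDrift [Fintype ι] (hlam : ∀ i, 0 ≤ lam i) (C : Finset ι) :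
    IsLeast { v : ℝ | ∃ π : κ → ι → ℝ,
      (∀ i, (∀ j, 0 ≤ π i j) ∧ (∀ j, j ∉ S i → π i j = 0) ∧ (∑ j, π i j) = 1) ∧
      v = ∑ j ∈ C, w j *
        ((∑ i ∈ Finset.univ.filter (fun i => S i ⊆ C), lam i * π i j) - μ j) }
      (optimalTotalDrift S lam w μ hS C) := by
  constructor
  · choose g hgS hgw using fun i => (S i).exists_mem_eq_inf' (hS i) w
    refine ⟨fun i j => if j = g i then 1 else 0, fun i => ⟨fun j => ?_, fun j hj => ?_, ?_⟩, ?_⟩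
    · positivity
    · exact if_neg (by rintro rfl; exact hj (hgS i))
    · simp
    · rw [sum_mul_sum_sub_eq, optimalTotalDrift]
      congr 1
      refine sum_congr rfl fun i hi => ?_
      have hgC : g i ∈ C := (mem_filter.1 hi).2 (hgS i)
      simp [hgw i, hgC]
  · rintro _ ⟨π, hπ, rfl⟩
    rw [sum_mul_sum_sub_eq, optimalTotalDrift]
    gcongr with i hi
    · exact hlam i
    · obtain ⟨hπ0, hπS, hπ1⟩ := hπ i
      exact inf'_le_sum_mul_of_support_subset (hS i) (mem_filter.1 hi).2 w hπ0 hπS hπ1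

lemma restrictedDrift_eq_inv_card_mul [Fintype ι] (hlam : ∀ i, 0 ≤ lam i) (C : Finset ι) :
    restrictedDrift S lam w μ C = (C.card : ℝ)⁻¹ * optimalTotalDrift S lam w μ hS C := by
  rw [restrictedDrift, (isLeast_optimalTotalDrift S lam w μ hS hlam C).csInf_eq]

@[simp]
lemma optimalTotalDrift_empty : optimalTotalDrift S lam w μ hS ∅ = 0 := by
  simp [optimalTotalDrift, subset_empty, (hS _).ne_empty]

lemma restrictedDrift_eq_iff [Fintype ι] (hlam : ∀ i, 0 ≤ lam i) {C : Finset ι}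
    (hC : C.Nonempty) (v : ℝ) :
    restrictedDrift S lam w μ C = v ↔ optimalTotalDrift S lam w μ hS C = C.card * v := by
  rw [restrictedDrift_eq_inv_card_mul S lam w μ hS hlam,
    inv_mul_eq_iff_eq_mul₀ (Nat.cast_ne_zero.2 hC.card_ne_zero)]

lemma optimalTotalDrift_le_card_mul [Fintype ι] (hlam : ∀ i, 0 ≤ lam i) {v : ℝ}
    (hmax : ∀ C : Finset ι, C.Nonempty → restrictedDrift S lam w μ C ≤ v) (C : Finset ι) :
    optimalTotalDrift S lam w μ hS C ≤ C.card * v := by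
  rcases C.eq_empty_or_nonempty with rfl | hC
  · simp
  · have hCpos : (0 : ℝ) < C.card := Nat.cast_pos.2 hC.card_pos
    simpa only [restrictedDrift_eq_inv_card_mul S lam w μ hS hlam, inv_mul_le_iff₀ hCpos]
      using hmax C hC

lemma optimalTotalDrift_union_add_inter (A B : Finset ι) :
    optimalTotalDrift S lam w μ hS (A ∪ B) + optimalTotalDrift S lam w μ hS (A ∩ B)
      = optimalTotalDrift S lam w μ hS A + optimalTotalDrift S lam w μ hS B
        + ∑ i ∈ univ.filter (fun i => S i ⊆ A ∪ B ∧ ¬ S i ⊆ A ∧ ¬ S i ⊆ B),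
            lam i * (S i).inf' (hS i) w := by
  have hμ := sum_union_inter (s₁ := A) (s₂ := B) (f := fun j => w j * μ j)
  have hterm : ∀ i, (if S i ⊆ A ∪ B then lam i * (S i).inf' (hS i) w else 0)
        + (if S i ⊆ A ∩ B then lam i * (S i).inf' (hS i) w else 0)
      = (if S i ⊆ A then lam i * (S i).inf' (hS i) w else 0)
        + (if S i ⊆ B then lam i * (S i).inf' (hS i) w else 0)
        + (if S i ⊆ A ∪ B ∧ ¬ S i ⊆ A ∧ ¬ S i ⊆ B then lam i * (S i).inf' (hS i) w else 0) := by
    intro i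
    have hA : S i ⊆ A → S i ⊆ A ∪ B := fun h => h.trans subset_union_left
    have hB : S i ⊆ B → S i ⊆ A ∪ B := fun h => h.trans subset_union_right
    simp only [subset_inter_iff]
    split_ifs <;> simp_all
  simp only [optimalTotalDrift, sum_filter]
  have := sum_congr rfl fun i (_ : i ∈ univ) => hterm i
  simp only [sum_add_distrib] at this
  linarith

end Drift

theorem union_of_maximizing_clusters_general {ι κ : Type*} [Fintype ι] [Fintype κ] [DecidableEq ι]
    (S : κ → Finset ι) (lam : κ → ℝ) (w μ : ι → ℝ)
    (hw : ∀ j, 0 < w j) (hlam : ∀ i, 0 ≤ lam i)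
    (hSne : ∀ i, (S i).Nonempty)
    (A B : Finset ι) (hA : A.Nonempty) (hB : B.Nonempty) (v : ℝ)
    (hmax : ∀ C : Finset ι, C.Nonempty → restrictedDrift S lam w μ C ≤ v)
    (hAv : restrictedDrift S lam w μ A = v)
    (hBv : restrictedDrift S lam w μ B = v) :
    restrictedDrift S lam w μ (A ∪ B) = v ∧
      ∀ i, S i ⊆ A ∪ B → ¬ S i ⊆ A → ¬ S i ⊆ B → lam i = 0 := by
  set F := optimalTotalDrift S lam w μ hSne
  have hle := optimalTotalDrift_le_card_mul S lam w μ hSne hlam hmax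
  have hFA : F A = A.card * v := (restrictedDrift_eq_iff S lam w μ hSne hlam hA v).1 hAv
  have hFB : F B = B.card * v := (restrictedDrift_eq_iff S lam w μ hSne hlam hB v).1 hBv
  have hcards : ((A ∪ B).card + (A ∩ B).card) * v = (A.card + B.card) * v := by
    rw [← Nat.cast_add, ← Nat.cast_add, card_union_add_card_inter]
  set X := univ.filter (fun i => S i ⊆ A ∪ B ∧ ¬ S i ⊆ A ∧ ¬ S i ⊆ B)
  have hsuper : F (A ∪ B) + F (A ∩ B) = F A + F B + ∑ i ∈ X, lam i * (S i).inf' (hSne i) w :=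
    optimalTotalDrift_union_add_inter S lam w μ hSne A B
  have hm (i : κ) : 0 < (S i).inf' (hSne i) w := (lt_inf'_iff _).2 fun j _ => hw j
  have hX_nonneg (i : κ) (_ : i ∈ X) : 0 ≤ lam i * (S i).inf' (hSne i) w :=
    mul_nonneg (hlam i) (hm i).le
  have hX : ∑ i ∈ X, lam i * (S i).inf' (hSne i) w = 0 := by
    linarith [hle (A ∪ B), hle (A ∩ B), sum_nonneg hX_nonneg]
  refine ⟨?_, fun i hiAB hiA hiB => ?_⟩
  · refine (restrictedDrift_eq_iff S lam w μ hSne hlam (hA.mono subset_union_left) v).2 ?_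
    linarith [hle (A ∪ B), hle (A ∩ B)]
  · have hiX : i ∈ X := mem_filter.2 ⟨mem_univ i, hiAB, hiA, hiB⟩
    exact (mul_eq_zero.1 ((sum_eq_zero_iff_of_nonneg hX_nonneg).1 hX i hiX)).resolve_right
      (hm i).ne'

theorem union_of_maximizing_clusters {ι κ : Type*} [Fintype ι] [Fintype κ] [DecidableEq ι]
    (S : κ → Finset ι) (lam : κ → ℝ) (w μ : ι → ℝ)
    (hw : ∀ j, 0 < w j) (hμ : ∀ j, 0 < μ j) (hlam : ∀ i, 0 ≤ lam i)
    (hSne : ∀ i, (S i).Nonempty)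
    (A B : Finset ι) (hA : A.Nonempty) (hB : B.Nonempty) (v : ℝ)
    (hmax : ∀ C : Finset ι, C.Nonempty → restrictedDrift S lam w μ C ≤ v)
    (hAv : restrictedDrift S lam w μ A = v)
    (hBv : restrictedDrift S lam w μ B = v) :
    restrictedDrift S lam w μ (A ∪ B) = v ∧
      ∀ i, S i ⊆ A ∪ B → ¬ S i ⊆ A → ¬ S i ⊆ B → lam i = 0 :=
  union_of_maximizing_clusters_general S lam w μ hw hlam hSne A B hA hB v hmax hAv hBv
end

section
/- (One-step monotonicity of JLW routing) Let C be a finite set with weights w_j > 0 and let x, z : C → ℤ with x_j ≤ z_j for all j. Fix a nonempty neighbourhood S ⊆ C. Let j ∈ S minimize w_j x_j over S and let l ∈ S minimize w_l z_l over S, where the choices are coupled so that if w_j z_j = w_j x_j then l = j is chosen. Then x + e_j ≤ z + e_l componentwise. -/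
theorem add_single_le_add_single {ι : Type*} [DecidableEq ι] {x z : ι → ℤ} {j l : ι}
    (hxz : x ≤ z) (hlt : l ≠ j → x j < z j) :
    x + Pi.single j 1 ≤ z + Pi.single l 1 := by
  intro r
  simp only [Pi.add_apply]
  obtain rfl | hrj := eq_or_ne r j
  · obtain rfl | hlr := eq_or_ne l r
    · simpa using hxz l
    · rw [Pi.single_eq_same, Pi.single_eq_of_ne' hlr]
      linarith [hlt hlr]
  · rw [Pi.single_eq_of_ne hrj]
    have hsingle : 0 ≤ (Pi.single l 1 : ι → ℤ) r :=
      (Pi.single_nonneg.mpr zero_le_one : (0 : ι → ℤ) ≤ _) r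
    linarith [hxz r]

theorem jlw_one_step_monotone_general {ι : Type*} [DecidableEq ι]
    (w : ι → ℝ)
    (x z : ι → ℤ) (hxz : ∀ r, x r ≤ z r)
    (j l : ι)
    (hcouple : w j * (z j : ℝ) = w j * (x j : ℝ) → l = j) :
    ∀ r, x r + (Pi.single j (1 : ℤ) : ι → ℤ) r ≤ z r + (Pi.single l (1 : ℤ) : ι → ℤ) r := by
  have hlt : l ≠ j → x j < z j := fun hlj =>
    (hxz j).lt_of_ne fun hxj => hlj (hcouple (by rw [hxj]))
  exact add_single_le_add_single hxz hlt

theorem jlw_one_step_monotone {ι : Type*} [DecidableEq ι]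
    (w : ι → ℝ) (hw : ∀ j, 0 < w j)
    (x z : ι → ℤ) (hxz : ∀ r, x r ≤ z r)
    (S : Finset ι) (hS : S.Nonempty)
    (j l : ι) (hj : j ∈ S) (hl : l ∈ S)
    (hjmin : ∀ r ∈ S, w j * (x j : ℝ) ≤ w r * (x r : ℝ))
    (hlmin : ∀ r ∈ S, w l * (z l : ℝ) ≤ w r * (z r : ℝ))
    (hcouple : w j * (z j : ℝ) = w j * (x j : ℝ) → l = j) :
    ∀ r, x r + (Pi.single j (1 : ℤ) : ι → ℤ) r ≤ z r + (Pi.single l (1 : ℤ) : ι → ℤ) r :=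
  jlw_one_step_monotone_general w x z hxz j l hcouple
end

section
/- (Monotonicity under extra arrivals) Let C be a finite set with weights w_j > 0. Consider two processes ξ(n), ζ(n) on ℤ^C driven by the same sequence of events: each event is either a departure at a fixed station (subtract e_j from both), a common arrival at a neighbourhood S ⊆ C routed by JLW in each process with the coupled tie-breaking rule, or an extra arrival routed by JLW only in ζ. If ξ(0) = ζ(0), then ξ(n) ≤ ζ(n) componentwise for all n. -/
/-!
Each event preserves the componentwise order `ξ ≤ ζ`. Departures and extra arrivals clearly do.
For a common arrival routed to `j` in `ξ` and to `l ≠ j` in `ζ`, the coupled tie-breaking rule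
forces `ξ j ≠ ζ j`, hence `ξ j < ζ j`, so the integer coordinate `ξ j` has room for one more
customer.
-/

section

variable {ι : Type*} [DecidableEq ι]

lemma add_single_one_le_of_lt {x z : ι → ℤ} (hxz : x ≤ z) {j : ι} (hj : x j < z j) :
    x + Pi.single j 1 ≤ z := by
  intro r
  by_cases hrj : r = j
  · subst hrj
    simpa [Int.add_one_le_iff] using hj
  · simpa [Pi.single_apply, hrj] using hxz r

lemma add_single_one_le_add_single_one {x z : ι → ℤ} (hxz : x ≤ z) {j l : ι}
    (htie : z j = x j → l = j) : x + Pi.single j 1 ≤ z + Pi.single l 1 := by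
  by_cases hlj : l = j
  · subst hlj
    exact add_le_add_left hxz _
  have hj : x j < z j := lt_of_le_of_ne (hxz j) fun h => hlj (htie h.symm)
  calc x + Pi.single j 1 ≤ z := add_single_one_le_of_lt hxz hj
    _ ≤ z + Pi.single l 1 := le_add_of_nonneg_right (Pi.single_nonneg.2 zero_le_one)

end

theorem jlw_monotone_under_extra_arrivals_general {ι : Type*} [DecidableEq ι]
    (w : ι → ℝ)
    (ξ ζ : ℕ → ι → ℤ) (h0 : ξ 0 = ζ 0)
    (hstep : ∀ n,
      -- departure at some station, affecting both processes
      (∃ j, ξ (n + 1) = ξ n - Pi.single j 1 ∧ ζ (n + 1) = ζ n - Pi.single j 1) ∨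
      -- common arrival at a neighbourhood S, routed by JLW in each process,
      -- with the coupled tie-breaking rule
      (∃ (S : Finset ι) (j l : ι), S.Nonempty ∧ j ∈ S ∧ l ∈ S ∧
        (∀ r ∈ S, w j * (ξ n j : ℝ) ≤ w r * (ξ n r : ℝ)) ∧
        (∀ r ∈ S, w l * (ζ n l : ℝ) ≤ w r * (ζ n r : ℝ)) ∧
        (w j * (ζ n j : ℝ) = w j * (ξ n j : ℝ) → l = j) ∧
        ξ (n + 1) = ξ n + Pi.single j 1 ∧ ζ (n + 1) = ζ n + Pi.single l 1) ∨
      -- extra arrival, routed by JLW only in ζ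
      (∃ (S : Finset ι) (l : ι), l ∈ S ∧
        (∀ r ∈ S, w l * (ζ n l : ℝ) ≤ w r * (ζ n r : ℝ)) ∧
        ξ (n + 1) = ξ n ∧ ζ (n + 1) = ζ n + Pi.single l 1)) :
    ∀ n r, ξ n r ≤ ζ n r := by
  suffices ∀ n, ξ n ≤ ζ n from this
  intro n
  induction n with
  | zero => exact h0.le
  | succ n ih =>
    rcases hstep n with ⟨j, hξ, hζ⟩ | ⟨-, j, l, -, -, -, -, -, htie, hξ, hζ⟩ | ⟨-, l, -, -, hξ, hζ⟩
    · rw [hξ, hζ]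
      exact sub_le_sub_right ih _
    · rw [hξ, hζ]
      exact add_single_one_le_add_single_one ih fun h => htie (by rw [h])
    · rw [hξ, hζ]
      exact le_add_of_le_of_nonneg ih (Pi.single_nonneg.2 zero_le_one)

theorem jlw_monotone_under_extra_arrivals {ι : Type*} [DecidableEq ι]
    (w : ι → ℝ) (hw : ∀ j, 0 < w j)
    (ξ ζ : ℕ → ι → ℤ) (h0 : ξ 0 = ζ 0)
    (hstep : ∀ n,
      -- departure at some station, affecting both processes
      (∃ j, ξ (n + 1) = ξ n - Pi.single j 1 ∧ ζ (n + 1) = ζ n - Pi.single j 1) ∨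
      -- common arrival at a neighbourhood S, routed by JLW in each process,
      -- with the coupled tie-breaking rule
      (∃ (S : Finset ι) (j l : ι), S.Nonempty ∧ j ∈ S ∧ l ∈ S ∧
        (∀ r ∈ S, w j * (ξ n j : ℝ) ≤ w r * (ξ n r : ℝ)) ∧
        (∀ r ∈ S, w l * (ζ n l : ℝ) ≤ w r * (ζ n r : ℝ)) ∧
        (w j * (ζ n j : ℝ) = w j * (ξ n j : ℝ) → l = j) ∧
        ξ (n + 1) = ξ n + Pi.single j 1 ∧ ζ (n + 1) = ζ n + Pi.single l 1) ∨
      -- extra arrival, routed by JLW only in ζ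
      (∃ (S : Finset ι) (l : ι), l ∈ S ∧
        (∀ r ∈ S, w l * (ζ n l : ℝ) ≤ w r * (ζ n r : ℝ)) ∧
        ξ (n + 1) = ξ n ∧ ζ (n + 1) = ζ n + Pi.single l 1)) :
    ∀ n r, ξ n r ≤ ζ n r :=
  jlw_monotone_under_extra_arrivals_general w ξ ζ h0 hstep
end
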